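/- arXiv:2501.12412 — 4 statements merged into one kernel-verified Lean document; each statement's English description precedes it below -/
import Mathlib

section
/- Let G be a strongly connected digraph with n ≥ 4 vertices and m arcs, and let α ∈ [1/2, 1). Then the A_α spectral radius satisfies λ_α(G) ≤ max{α·Δ⁺(G), (1−α)(m−n+1)/2} + 2α. -/
open Matrix Finset ENNReal

/-- The outdegree of a vertex in a digraph given by its arc relation. -/
def outDeg {V : Type*} [Fintype V] (E : V → V → Prop) [DecidableRel E] (u : V) : ℕ :=
  (Finset.univ.filter (fun v => E u v)).card

/-- The maximum outdegree. -/
def maxOutDeg {V : Type*} [Fintype V] (E : V → V → Prop) [DecidableRel E] : ℕ :=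
  Finset.univ.sup (outDeg E)

/-- A simple digraph has no loops. -/
def IsSimpleDigraph {V : Type*} (E : V → V → Prop) : Prop := ∀ v, ¬ E v v

/-- Strong connectivity: every vertex reaches every other by a directed walk. -/
def StronglyConnected {V : Type*} (E : V → V → Prop) : Prop :=
  ∀ u v, Relation.ReflTransGen E u v

/-- The A_α matrix  α D + (1-α) A  of a digraph, over ℂ. -/
noncomputable def Aalpha {V : Type*} [Fintype V] [DecidableEq V] (α : ℝ)
    (E : V → V → Prop) [DecidableRel E] : Matrix V V ℂ :=
  (α : ℂ) • Matrix.diagonal (fun u => (outDeg E u : ℂ)) +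
    ((1 - α : ℝ) : ℂ) • Matrix.of (fun u v => if E u v then (1 : ℂ) else 0)

/-- The A_α spectral radius of a digraph. -/
noncomputable def lambdaAlpha {V : Type*} [Fintype V] [DecidableEq V] (α : ℝ)
    (E : V → V → Prop) [DecidableRel E] : ℝ≥0∞ :=
  spectralRadius ℂ (Aalpha α E)

/-- The signless Laplacian matrix D + A of a digraph, over ℂ. -/
noncomputable def signlessLaplacian {V : Type*} [Fintype V] [DecidableEq V]
    (E : V → V → Prop) [DecidableRel E] : Matrix V V ℂ :=
  Matrix.diagonal (fun u => (outDeg E u : ℂ)) +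
    Matrix.of (fun u v => if E u v then (1 : ℂ) else 0)

/-- The signless Laplacian spectral radius of a digraph. -/
noncomputable def qSpec {V : Type*} [Fintype V] [DecidableEq V]
    (E : V → V → Prop) [DecidableRel E] : ℝ≥0∞ :=
  spectralRadius ℂ (signlessLaplacian E)

/-!
Take an eigenvector `x` of `A_α` and a vertex `v` maximising `|x_u| / d⁺_u`. Comparing the `v`-th
coordinates of `A_α x = λ x` gives `|λ| d⁺_v ≤ α (d⁺_v)² + (1 - α) S_v`, where `S_v` is the sum of
the outdegrees of the out-neighbours of `v`. Strong connectivity makes every outdegree at least `1`,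
so counting arcs outside the out-neighbourhood gives `S_v ≤ m - n + 1`; trivially also
`S_v ≤ d⁺_v Δ⁺`. Splitting into `d⁺_v ≤ 2` and `d⁺_v ≥ 2` turns these into the bound.
-/

namespace Matrix

variable {K ι : Type*} [NormedField K] [Fintype ι] [DecidableEq ι]

theorem exists_norm_mul_le_weighted_row_sum {A : Matrix ι ι K} {w : ι → ℝ} (hw : ∀ i, 0 < w i)
    {μ : K} (hμ : μ ∈ spectrum K A) : ∃ i, ‖μ‖ * w i ≤ ∑ j, ‖A i j‖ * w j := by
  rw [← spectrum_toLin', ← Module.End.hasEigenvalue_iff_mem_spectrum] at hμ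
  obtain ⟨x, hx, hx0⟩ := hμ.exists_hasEigenvector
  have hAx : A *ᵥ x = μ • x := by
    rw [← toLin'_apply]; exact Module.End.mem_eigenspace_iff.mp hx
  have : Nonempty ι := by
    obtain ⟨j, -⟩ := Function.ne_iff.mp hx0; exact ⟨j⟩
  obtain ⟨i, -, hi⟩ := exists_max_image univ (fun j => ‖x j‖ / w j) univ_nonempty
  set c := ‖x i‖ / w i
  have hxc : ∀ j, ‖x j‖ ≤ c * w j := fun j => (div_le_iff₀ (hw j)).mp (hi j (mem_univ j))
  have hc : 0 < c := by
    obtain ⟨j, hj⟩ := Function.ne_iff.mp hx0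
    exact (div_pos (norm_pos_iff.mpr hj) (hw j)).trans_le (hi j (mem_univ j))
  have hxi : ‖x i‖ = c * w i := (div_mul_cancel₀ _ (hw i).ne').symm
  refine ⟨i, le_of_mul_le_mul_left ?_ hc⟩
  calc c * (‖μ‖ * w i) = ‖(A *ᵥ x) i‖ := by
        rw [hAx, Pi.smul_apply, smul_eq_mul, norm_mul, hxi]; ring
    _ ≤ ∑ j, ‖A i j‖ * ‖x j‖ := by
        simp only [mulVec, dotProduct, ← norm_mul]; exact norm_sum_le _ _
    _ ≤ ∑ j, ‖A i j‖ * (c * w j) := by gcongr with j; exact hxc j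
    _ = c * ∑ j, ‖A i j‖ * w j := by rw [mul_sum]; exact sum_congr rfl fun j _ => by ring

theorem spectralRadius_le_of_weighted_row_sum_le {A : Matrix ι ι K} {w : ι → ℝ}
    (hw : ∀ i, 0 < w i) {c : ℝ} (hrow : ∀ i, ∑ j, ‖A i j‖ * w j ≤ c * w i) :
    spectralRadius K A ≤ ENNReal.ofReal c := by
  refine iSup₂_le fun μ hμ => ?_
  obtain ⟨i, hi⟩ := exists_norm_mul_le_weighted_row_sum hw hμ
  rw [← enorm_eq_nnnorm, ← ofReal_norm]
  exact ENNReal.ofReal_le_ofReal (le_of_mul_le_mul_right (hi.trans (hrow i)) (hw i))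

end Matrix

section Digraph

variable {V : Type*} [Fintype V] (E : V → V → Prop) [DecidableRel E]

theorem outDeg_le_maxOutDeg (v : V) : outDeg E v ≤ maxOutDeg E :=
  le_sup (mem_univ v)

theorem sum_outDeg_le_outDeg_mul_maxOutDeg (v : V) :
    ∑ u ∈ univ.filter (E v), outDeg E u ≤ outDeg E v * maxOutDeg E :=
  sum_le_card_nsmul _ _ _ fun u _ => outDeg_le_maxOutDeg E u

theorem StronglyConnected.one_le_outDeg (hsc : StronglyConnected E)
    (hcard : 2 ≤ Fintype.card V) (v : V) : 1 ≤ outDeg E v := by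
  obtain ⟨w, hw⟩ := Fintype.exists_ne_of_one_lt_card hcard v
  rcases (hsc v w).cases_head with h | ⟨u, hu, -⟩
  · exact absurd h.symm hw
  · exact card_pos.mpr ⟨u, mem_filter.mpr ⟨mem_univ u, hu⟩⟩

/-- Each of the `n - 1 - d⁺_v` vertices outside `N⁺(v) ∪ {v}` has an out-arc, and `v` has `d⁺_v`. -/
theorem sum_outDeg_add_card_le (hsimple : IsSimpleDigraph E) (hsc : StronglyConnected E)
    (hcard : 2 ≤ Fintype.card V) (v : V) :
    ∑ u ∈ univ.filter (E v), outDeg E u + Fintype.card V ≤ ∑ u, outDeg E u + 1 := by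
  classical
  set N := univ.filter (E v)
  set Nc := univ.filter (fun u => ¬ E v u)
  have hv : v ∈ Nc := mem_filter.mpr ⟨mem_univ v, hsimple v⟩
  have hsplit : ∑ u ∈ N, outDeg E u + ∑ u ∈ Nc, outDeg E u = ∑ u, outDeg E u :=
    sum_filter_add_sum_filter_not _ _ _
  have hcards : outDeg E v + Nc.card = Fintype.card V :=
    card_filter_add_card_filter_not (E v)
  have hrest : (Nc.erase v).card ≤ ∑ u ∈ Nc.erase v, outDeg E u := by
    simpa using card_nsmul_le_sum _ _ 1 fun u _ => hsc.one_le_outDeg E hcard u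
  have hNc := add_sum_erase Nc (outDeg E) hv
  have hNc_card := card_erase_of_mem hv
  have := card_pos.mpr ⟨v, hv⟩
  omega

end Digraph

section Aalpha

variable {V : Type*} [Fintype V] [DecidableEq V] {E : V → V → Prop} [DecidableRel E] {α : ℝ}

theorem norm_Aalpha_apply (hα0 : 0 ≤ α) (hα1 : α ≤ 1) (v u : V) :
    ‖Aalpha α E v u‖ =
      α * (if v = u then (outDeg E v : ℝ) else 0) + (1 - α) * (if E v u then 1 else 0) := by
  have hnonneg : 0 ≤ α * (if v = u then (outDeg E v : ℝ) else 0) +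
      (1 - α) * (if E v u then 1 else 0) := by
    have : (0 : ℝ) ≤ 1 - α := by linarith
    split_ifs <;> positivity
  rw [← Real.norm_of_nonneg hnonneg, ← Complex.norm_real]
  congr 1
  simp only [Aalpha, Matrix.add_apply, Matrix.smul_apply, diagonal_apply, of_apply, smul_eq_mul]
  split_ifs <;> push_cast <;> ring

theorem sum_norm_Aalpha_mul_outDeg (hα0 : 0 ≤ α) (hα1 : α ≤ 1) (v : V) :
    ∑ u, ‖Aalpha α E v u‖ * outDeg E u =
      α * outDeg E v * outDeg E v + (1 - α) * ∑ u ∈ univ.filter (E v), (outDeg E u : ℝ) := by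
  simp [norm_Aalpha_apply hα0 hα1, add_mul, mul_assoc, sum_add_distrib, mul_sum, sum_filter]

end Aalpha

/-- For `d ≤ 2` use `S ≤ d D` and `1 - α ≤ α`; for `d ≥ 2` use `S ≤ K ≤ 2M / (1 - α)`. -/
theorem alpha_mul_sq_add_le_mul {α d D S K M : ℝ} (hα : 1 / 2 ≤ α) (hα1 : α ≤ 1) (hd : 0 ≤ d)
    (hdD : d ≤ D) (hSK : S ≤ K) (hSd : S ≤ d * D) (hDM : α * D ≤ M)
    (hKM : (1 - α) * K / 2 ≤ M) : α * d * d + (1 - α) * S ≤ (M + 2 * α) * d := by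
  rcases le_total d 2 with hd2 | hd2
  · nlinarith [mul_nonneg (mul_nonneg hd (by linarith : 0 ≤ α)) (sub_nonneg.mpr hd2),
      mul_nonneg (sub_nonneg.mpr hα1) (sub_nonneg.mpr hSd),
      mul_nonneg hd (mul_nonneg (by linarith : 0 ≤ 2 * α - 1) (hd.trans hdD))]
  · nlinarith [mul_nonneg (sub_nonneg.mpr hα1) (sub_nonneg.mpr hSK),
      mul_nonneg (sub_nonneg.mpr hd2) (by nlinarith : 0 ≤ M - α * d)]

theorem stmt_0 {V : Type*} [Fintype V] [DecidableEq V]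
    (E : V → V → Prop) [DecidableRel E]
    (hsimple : IsSimpleDigraph E) (hsc : StronglyConnected E)
    (n m : ℕ) (hn : n = Fintype.card V) (hn4 : 4 ≤ n)
    (hm : m = ∑ v, outDeg E v)
    (α : ℝ) (hα : 1/2 ≤ α) (hα1 : α < 1) :
    lambdaAlpha α E ≤
      ENNReal.ofReal
        (max (α * (maxOutDeg E : ℝ)) ((1 - α) * ((m : ℝ) - n + 1) / 2) + 2 * α) := by
  have hcard : 2 ≤ Fintype.card V := by omega
  have hdeg_pos (u : V) : (0 : ℝ) < outDeg E u := by
    exact_mod_cast hsc.one_le_outDeg E hcard u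
  refine spectralRadius_le_of_weighted_row_sum_le hdeg_pos fun v => ?_
  rw [sum_norm_Aalpha_mul_outDeg (by linarith) hα1.le]
  have hS_le : ∑ u ∈ univ.filter (E v), (outDeg E u : ℝ) ≤ (m : ℝ) - n + 1 := by
    have := Nat.cast_le (α := ℝ) |>.mpr (sum_outDeg_add_card_le E hsimple hsc hcard v)
    subst hn hm
    push_cast at this ⊢
    linarith
  have hS_le_mul : ∑ u ∈ univ.filter (E v), (outDeg E u : ℝ) ≤ outDeg E v * maxOutDeg E := by
    exact_mod_cast sum_outDeg_le_outDeg_mul_maxOutDeg E v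
  exact alpha_mul_sq_add_le_mul hα hα1.le (Nat.cast_nonneg _)
    (by exact_mod_cast outDeg_le_maxOutDeg E v) hS_le hS_le_mul (le_max_left _ _)
    (le_max_right _ _)
end

section
/- Let G₁ and G₂ be strongly connected digraphs each with n ≥ 4 vertices and m arcs, and let α ∈ [1/√2, 1). If Δ⁺(G₁) ≥ 2α(1−α)(m−n+1) + 2α and Δ⁺(G₁) > Δ⁺(G₂), then λ_α(G₁) > λ_α(G₂). -/
open Matrix Finset ENNReal

/-!
For an entrywise nonnegative matrix the spectral radius dominates every diagonal entry (apply
Gelfand's formula to the diagonal entries of the powers), so `λ_α(G₁) ≥ α Δ` with `Δ = Δ⁺(G₁)`.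

Conversely, every outdegree `d_v` of `G₂` is at most `Δ - 1`. Let `μ` be an eigenvalue of
`A_α(G₂)`, with eigenvector `x` and `|x_u|` maximal, and suppose `|μ| ≥ α Δ`. Comparing row `v` of
`A_α x = μ x` with `|x_v| ≤ |x_u|` gives `α (Δ - 1) |x_v| ≤ (d_v - α) |x_u|` for every `v`. The
outdegrees of the out-neighbours of `u` add up to at most `m - n + 1`, since every vertex of a
strongly connected digraph has outdegree at least one; so summing over them and substituting into
row `u` gives `α (Δ - 1) (|μ| - α d_u) ≤ (1 - α) (m - n + 1 - α d_u)`, which the hypothesis on `Δ`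
together with `2 α² ≥ 1` rules out.
-/

section LinftyOpNorm

attribute [local instance] Matrix.linftyOpSeminormedAddCommGroup

theorem Matrix.nnnorm_apply_le_linfty_opNNNorm {m n α : Type*} [Fintype m] [Fintype n]
    [SeminormedAddCommGroup α] (A : Matrix m n α) (i : m) (j : n) : ‖A i j‖₊ ≤ ‖A‖₊ := by
  rw [linfty_opNNNorm_def]
  exact (single_le_sum (f := fun k => ‖A i k‖₊) (fun k _ => zero_le) (mem_univ j)).trans
    (le_sup (f := fun r => ∑ k, ‖A r k‖₊) (mem_univ i))

end LinftyOpNorm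

section MatrixSpectrum

variable {n : Type*} [Fintype n] [DecidableEq n]

theorem Matrix.apply_self_pow_le_pow_apply_self {M : Matrix n n ℝ} (hM : ∀ i j, 0 ≤ M i j)
    (i : n) (k : ℕ) : M i i ^ k ≤ (M ^ k) i i := by
  induction k with
  | zero => simp
  | succ k ih =>
    rw [pow_succ, pow_succ, mul_apply]
    calc M i i ^ k * M i i ≤ (M ^ k) i i * M i i := mul_le_mul_of_nonneg_right ih (hM i i)
      _ ≤ ∑ j, (M ^ k) i j * M j i :=
        single_le_sum (f := fun j => (M ^ k) i j * M j i)
          (fun j _ => mul_nonneg (pow_apply_nonneg hM k i j) (hM j i)) (mem_univ i)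

attribute [local instance] Matrix.linftyOpNormedRing Matrix.linftyOpNormedAlgebra

theorem Matrix.ofReal_apply_self_le_spectralRadius {M : Matrix n n ℝ} (hM : ∀ i j, 0 ≤ M i j)
    (i : n) : ENNReal.ofReal (M i i) ≤ spectralRadius ℂ (M.map Complex.ofReal) := by
  have : CompleteSpace (Matrix n n ℂ) := FiniteDimensional.complete ℂ _
  refine ge_of_tendsto (spectrum.pow_nnnorm_pow_one_div_tendsto_nhds_spectralRadius _)
    (Filter.eventually_atTop.2 ⟨1, fun k hk => ?_⟩)
  have hpow : (M ^ k).map Complex.ofReal = M.map Complex.ofReal ^ k :=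
    M.map_pow Complex.ofRealHom k
  rw [one_div, ENNReal.le_rpow_inv_iff (by positivity), ENNReal.rpow_natCast,
    ← ENNReal.ofReal_pow (hM i i), ← hpow]
  calc ENNReal.ofReal (M i i ^ k) ≤ ENNReal.ofReal ((M ^ k) i i) :=
        ENNReal.ofReal_le_ofReal (apply_self_pow_le_pow_apply_self hM i k)
    _ = ‖((M ^ k).map Complex.ofReal) i i‖₊ := by
        rw [← enorm_eq_nnnorm, ← ofReal_norm]
        simp [abs_of_nonneg (pow_apply_nonneg hM k i i)]
    _ ≤ ‖(M ^ k).map Complex.ofReal‖₊ := by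
        exact_mod_cast nnnorm_apply_le_linfty_opNNNorm _ i i

theorem Matrix.spectralRadius_lt_ofReal [Nonempty n] (M : Matrix n n ℂ) {c : ℝ}
    (h : ∀ μ ∈ spectrum ℂ M, ‖μ‖ < c) : spectralRadius ℂ M < ENNReal.ofReal c := by
  have : CompleteSpace (Matrix n n ℂ) := FiniteDimensional.complete ℂ _
  exact spectrum.spectralRadius_lt_of_forall_lt M fun μ hμ =>
    Real.lt_toNNReal_iff_coe_lt.2 (h μ hμ)

theorem Matrix.exists_mulVec_eq_smul_of_mem_spectrum {K : Type*} [Field K] {M : Matrix n n K}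
    {μ : K} (h : μ ∈ spectrum K M) : ∃ x ≠ 0, M *ᵥ x = μ • x := by
  rw [← Matrix.spectrum_toLin', ← Module.End.hasEigenvalue_iff_mem_spectrum] at h
  obtain ⟨x, hx⟩ := h.exists_hasEigenvector
  exact ⟨x, hx.2, by simpa using hx.apply_eq_smul⟩

end MatrixSpectrum

section Digraph

variable {V : Type*} [Fintype V] (E : V → V → Prop) [DecidableRel E]

def outNeighbors (u : V) : Finset V := univ.filter (E u ·)

theorem card_outNeighbors (u : V) : #(outNeighbors E u) = outDeg E u := rfl

variable {E}

theorem StronglyConnected.outDeg_pos [Nontrivial V] (hc : StronglyConnected E) (u : V) :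
    0 < outDeg E u := by
  obtain ⟨w, hw⟩ := exists_ne u
  obtain ⟨v, huv, -⟩ := ((hc u w).cases_head).resolve_left hw.symm
  exact card_pos.2 ⟨v, by simpa using huv⟩

theorem IsSimpleDigraph.sum_outDeg_outNeighbors_le (hs : IsSimpleDigraph E)
    (hd : ∀ v, 0 < outDeg E v) (u : V) :
    ∑ v ∈ outNeighbors E u, (outDeg E v : ℝ) ≤ ∑ v, (outDeg E v : ℝ) - Fintype.card V + 1 := by
  have hu : u ∉ outNeighbors E u := by simpa [outNeighbors] using hs u
  have hsub := sum_le_sum_of_subset_of_nonneg (f := fun v => (outDeg E v : ℝ) - 1)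
    (subset_univ (cons u (outNeighbors E u) hu))
    (fun v _ _ => sub_nonneg.2 (by exact_mod_cast hd v))
  rw [sum_cons, sum_sub_distrib, sum_sub_distrib] at hsub
  simp only [sum_const, card_outNeighbors, card_univ, nsmul_eq_mul, mul_one] at hsub
  linarith

end Digraph

section Aalpha

variable {α : ℝ} {V : Type*} [Fintype V] [DecidableEq V] {E : V → V → Prop} [DecidableRel E]

variable (α E) in
def realAalpha : Matrix V V ℝ :=
  α • diagonal (fun u => (outDeg E u : ℝ)) + (1 - α) • of (fun u v => if E u v then 1 else 0)

theorem realAalpha_map_ofReal : (realAalpha α E).map Complex.ofReal = Aalpha α E := by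
  ext u v
  simp only [realAalpha, Aalpha, map_apply, Matrix.add_apply, Matrix.smul_apply, diagonal_apply,
    of_apply, smul_eq_mul]
  split_ifs <;> push_cast <;> ring

theorem realAalpha_nonneg (hα0 : 0 ≤ α) (hα1 : α ≤ 1) (u v : V) : 0 ≤ realAalpha α E u v := by
  simp only [realAalpha, Matrix.add_apply, Matrix.smul_apply, diagonal_apply, of_apply,
    smul_eq_mul]
  split_ifs <;> positivity

theorem IsSimpleDigraph.realAalpha_apply_self (hs : IsSimpleDigraph E) (u : V) :
    realAalpha α E u u = α * outDeg E u := by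
  simp [realAalpha, hs u]

theorem IsSimpleDigraph.ofReal_mul_maxOutDeg_le_lambdaAlpha (hs : IsSimpleDigraph E)
    (hα0 : 0 ≤ α) (hα1 : α ≤ 1) : ENNReal.ofReal (α * maxOutDeg E) ≤ lambdaAlpha α E := by
  rcases isEmpty_or_nonempty V with hV | hV
  · simp [maxOutDeg]
  obtain ⟨u, -, hu⟩ := exists_mem_eq_sup univ univ_nonempty (outDeg E)
  rw [lambdaAlpha, ← realAalpha_map_ofReal, maxOutDeg, hu, ← hs.realAalpha_apply_self]
  exact ofReal_apply_self_le_spectralRadius (realAalpha_nonneg hα0 hα1) u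

theorem Aalpha_mulVec_apply (x : V → ℂ) (v : V) :
    (Aalpha α E *ᵥ x) v =
      α * outDeg E v * x v + ((1 - α : ℝ) : ℂ) * ∑ w ∈ outNeighbors E v, x w := by
  rw [Aalpha, add_mulVec, smul_mulVec, smul_mulVec, Pi.add_apply, Pi.smul_apply, Pi.smul_apply,
    mulVec_diagonal]
  simp only [smul_eq_mul, Complex.ofReal_sub, Complex.ofReal_one, mulVec, dotProduct, of_apply,
    ite_mul, one_mul, zero_mul, mul_assoc, outNeighbors, sum_filter]

theorem norm_sub_mul_norm_le_of_Aalpha_mulVec_eq (hα0 : 0 ≤ α) (hα1 : α ≤ 1) {μ : ℂ}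
    {x : V → ℂ} (hx : Aalpha α E *ᵥ x = μ • x) (v : V) :
    (‖μ‖ - α * outDeg E v) * ‖x v‖ ≤ (1 - α) * ∑ w ∈ outNeighbors E v, ‖x w‖ := by
  have hrow : (μ - α * outDeg E v) * x v = ((1 - α : ℝ) : ℂ) * ∑ w ∈ outNeighbors E v, x w := by
    have := congrFun hx v
    rw [Aalpha_mulVec_apply, Pi.smul_apply, smul_eq_mul] at this
    linear_combination -this
  calc (‖μ‖ - α * outDeg E v) * ‖x v‖ ≤ ‖μ - α * outDeg E v‖ * ‖x v‖ := by
        gcongr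
        simpa [abs_of_nonneg hα0] using norm_sub_norm_le μ (α * outDeg E v)
    _ = (1 - α) * ‖∑ w ∈ outNeighbors E v, x w‖ := by
        rw [← norm_mul, hrow, norm_mul, Complex.norm_real, Real.norm_of_nonneg (by linarith)]
    _ ≤ (1 - α) * ∑ w ∈ outNeighbors E v, ‖x w‖ :=
        mul_le_mul_of_nonneg_left (norm_sum_le _ _) (by linarith)

end Aalpha

section Bound

theorem one_le_two_mul_sq_of_inv_sqrt_two_le {α : ℝ} (hα : 1 / √2 ≤ α) : 1 ≤ 2 * α ^ 2 := by
  have h := pow_le_pow_left₀ (by positivity) hα 2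
  rw [div_pow, Real.sq_sqrt zero_le_two] at h
  linarith

theorem mul_sub_one_mul_le_sub_mul_of_row_bound {α Δ r d y y₀ : ℝ} (hα : α ≤ 1)
    (hr : α * Δ ≤ r) (hd : 1 ≤ d) (hdΔ : d ≤ Δ - 1) (hy : 0 ≤ y) (hyy₀ : y ≤ y₀)
    (hrow : (r - α * d) * y ≤ (1 - α) * (d * y₀)) :
    α * (Δ - 1) * y ≤ (d - α) * y₀ := by
  -- the bound `y ≤ y₀` suffices when `αΔ ≤ d`, the row bound otherwise
  rcases le_or_gt (α * Δ) d with hαd | hαd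
  · nlinarith
  · have hpos : 0 < Δ - d := by linarith
    have hy₀ : 0 ≤ y₀ := hy.trans hyy₀
    refine le_of_mul_le_mul_right ?_ hpos
    calc α * (Δ - 1) * y * (Δ - d) = (Δ - 1) * (α * (Δ - d) * y) := by ring
      _ ≤ (Δ - 1) * ((r - α * d) * y) := by gcongr <;> linarith
      _ ≤ (Δ - 1) * ((1 - α) * (d * y₀)) := by gcongr; linarith
      _ = (d - α) * y₀ * (Δ - d) - (d - 1) * (α * Δ - d) * y₀ := by ring
      _ ≤ (d - α) * y₀ * (Δ - d) := by
        have : 0 ≤ (d - 1) * (α * Δ - d) * y₀ := by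
          apply mul_nonneg (mul_nonneg _ _) hy₀ <;> linarith
        linarith

theorem one_sub_mul_sub_lt_mul_sub_one_mul_sub {α Δ T r d : ℝ} (hα0 : 0 ≤ α)
    (hα2 : 1 ≤ 2 * α ^ 2) (hα1 : α < 1) (hr : α * Δ ≤ r) (hd : 1 ≤ d) (hdΔ : d ≤ Δ - 1) (hT : 0 ≤ T)
    (hΔ : 2 * α * (1 - α) * T + 2 * α ≤ Δ) :
    (1 - α) * (T - α * d) < α * (Δ - 1) * (r - α * d) := by
  have hα : 1 / 2 < α := by nlinarith
  have hβ : 0 < 1 - α := by linarith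
  calc (1 - α) * (T - α * d) < α * (Δ - 1) - α * (1 - α) * d := by
        nlinarith [mul_nonneg (mul_nonneg hT hβ.le) (by linarith : (0:ℝ) ≤ 2 * α ^ 2 - 1)]
    _ ≤ α * (Δ - 1) * (α * (Δ - d)) := by
        nlinarith [mul_nonneg (by linarith : (0:ℝ) ≤ Δ - d - 1)
          (by nlinarith : (0:ℝ) ≤ α * (Δ - 1) - (1 - α))]
    _ ≤ α * (Δ - 1) * (r - α * d) := by
        gcongr
        · nlinarith
        · linarith

variable {V : Type*} [Fintype V] [DecidableEq V] {E : V → V → Prop} [DecidableRel E]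

theorem norm_lt_of_mem_spectrum_Aalpha {α : ℝ} (hα : 1 / √2 ≤ α) (hα1 : α < 1)
    (hd : ∀ v, 0 < outDeg E v) {Δ : ℕ} (hdΔ : ∀ v, outDeg E v + 1 ≤ Δ) {T : ℝ}
    (hT : ∀ u, ∑ v ∈ outNeighbors E u, (outDeg E v : ℝ) ≤ T)
    (hΔ : 2 * α * (1 - α) * T + 2 * α ≤ Δ) {μ : ℂ} (hμ : μ ∈ spectrum ℂ (Aalpha α E)) :
    ‖μ‖ < α * Δ := by
  have hα2 := one_le_two_mul_sq_of_inv_sqrt_two_le hα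
  have hα0 : 0 ≤ α := (by positivity : (0:ℝ) ≤ 1 / √2).trans hα
  have hβ : 0 ≤ 1 - α := by linarith
  by_contra! hr
  obtain ⟨x, hx0, hx⟩ := exists_mulVec_eq_smul_of_mem_spectrum hμ
  obtain ⟨v₀, hv₀⟩ := Function.ne_iff.1 hx0
  obtain ⟨u, -, hu⟩ := exists_max_image univ (‖x ·‖) ⟨v₀, mem_univ _⟩
  have hxu : 0 < ‖x u‖ := (norm_pos_iff.2 hv₀).trans_le (hu v₀ (mem_univ _))
  have hrow := norm_sub_mul_norm_le_of_Aalpha_mulVec_eq hα0 hα1.le hx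
  have hd' (v : V) : (1 : ℝ) ≤ outDeg E v := Nat.one_le_cast.2 (hd v)
  have hdΔ' (v : V) : (outDeg E v : ℝ) ≤ Δ - 1 := by
    have : (outDeg E v : ℝ) + 1 ≤ Δ := by exact_mod_cast hdΔ v
    linarith
  have hentry (v : V) : α * (Δ - 1) * ‖x v‖ ≤ (outDeg E v - α) * ‖x u‖ := by
    refine mul_sub_one_mul_le_sub_mul_of_row_bound hα1.le hr (hd' v) (hdΔ' v) (norm_nonneg _)
      (hu v (mem_univ _)) ((hrow v).trans (mul_le_mul_of_nonneg_left ?_ hβ))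
    simpa [card_outNeighbors] using
      sum_le_card_nsmul (outNeighbors E v) (‖x ·‖) _ fun w _ => hu w (mem_univ _)
  have hsum : α * (Δ - 1) * ∑ v ∈ outNeighbors E u, ‖x v‖ ≤ (T - α * outDeg E u) * ‖x u‖ := by
    calc α * (Δ - 1) * ∑ v ∈ outNeighbors E u, ‖x v‖
        ≤ ∑ v ∈ outNeighbors E u, (outDeg E v - α) * ‖x u‖ := by
          rw [mul_sum]; exact sum_le_sum fun v _ => hentry v
      _ = (∑ v ∈ outNeighbors E u, (outDeg E v : ℝ) - α * outDeg E u) * ‖x u‖ := by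
          rw [← sum_mul, sum_sub_distrib, sum_const, card_outNeighbors, nsmul_eq_mul, mul_comm α]
      _ ≤ (T - α * outDeg E u) * ‖x u‖ := by gcongr; exact hT u
  have hΔ1 : (0 : ℝ) ≤ Δ - 1 := by linarith [hd' u, hdΔ' u]
  have hT0 : 0 ≤ T := (sum_nonneg fun v _ => Nat.cast_nonneg _).trans (hT u)
  have : α * (Δ - 1) * (‖μ‖ - α * outDeg E u) * ‖x u‖
      ≤ (1 - α) * (T - α * outDeg E u) * ‖x u‖ :=
    calc α * (Δ - 1) * (‖μ‖ - α * outDeg E u) * ‖x u‖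
        = α * (Δ - 1) * ((‖μ‖ - α * outDeg E u) * ‖x u‖) := by ring
      _ ≤ α * (Δ - 1) * ((1 - α) * ∑ v ∈ outNeighbors E u, ‖x v‖) :=
          mul_le_mul_of_nonneg_left (hrow u) (mul_nonneg hα0 hΔ1)
      _ = (1 - α) * (α * (Δ - 1) * ∑ v ∈ outNeighbors E u, ‖x v‖) := by ring
      _ ≤ (1 - α) * (T - α * outDeg E u) * ‖x u‖ :=
          (mul_le_mul_of_nonneg_left hsum hβ).trans_eq (mul_assoc _ _ _).symm
  exact (one_sub_mul_sub_lt_mul_sub_one_mul_sub hα0 hα2 hα1 hr (hd' u) (hdΔ' u) hT0 hΔ).not_ge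
    (le_of_mul_le_mul_right this hxu)

end Bound

theorem stmt_1_general {V₁ V₂ : Type*} [Fintype V₁] [DecidableEq V₁] [Fintype V₂] [DecidableEq V₂]
    (E₁ : V₁ → V₁ → Prop) [DecidableRel E₁] (E₂ : V₂ → V₂ → Prop) [DecidableRel E₂]
    (hs₁ : IsSimpleDigraph E₁)
    (hs₂ : IsSimpleDigraph E₂) (hc₂ : StronglyConnected E₂)
    (n m : ℕ) (hn₂ : Fintype.card V₂ = n) (hn4 : 4 ≤ n)
    (hm₂ : (∑ v, outDeg E₂ v) = m)
    (α : ℝ) (hα : 1 / Real.sqrt 2 ≤ α) (hα1 : α < 1)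
    (hΔ : (maxOutDeg E₁ : ℝ) ≥ 2 * α * (1 - α) * ((m : ℝ) - n + 1) + 2 * α)
    (hΔΔ : maxOutDeg E₁ > maxOutDeg E₂) :
    lambdaAlpha α E₂ < lambdaAlpha α E₁ := by
  have : Nontrivial V₂ := Fintype.one_lt_card_iff_nontrivial.1 (by omega)
  have hα0 : 0 ≤ α := (by positivity : (0 : ℝ) ≤ 1 / √2).trans hα
  have hd₂ := hc₂.outDeg_pos
  have hT (u : V₂) : ∑ v ∈ outNeighbors E₂ u, (outDeg E₂ v : ℝ) ≤ m - n + 1 := by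
    simpa [← hm₂, ← hn₂] using hs₂.sum_outDeg_outNeighbors_le hd₂ u
  have hdΔ (v : V₂) : outDeg E₂ v + 1 ≤ maxOutDeg E₁ :=
    (le_sup (f := outDeg E₂) (mem_univ v)).trans_lt hΔΔ
  calc lambdaAlpha α E₂ < ENNReal.ofReal (α * maxOutDeg E₁) :=
        spectralRadius_lt_ofReal _ fun μ hμ =>
          norm_lt_of_mem_spectrum_Aalpha hα hα1 hd₂ hdΔ hT hΔ hμ
    _ ≤ lambdaAlpha α E₁ := hs₁.ofReal_mul_maxOutDeg_le_lambdaAlpha hα0 hα1.le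

theorem stmt_1 {V₁ V₂ : Type*} [Fintype V₁] [DecidableEq V₁] [Fintype V₂] [DecidableEq V₂]
    (E₁ : V₁ → V₁ → Prop) [DecidableRel E₁] (E₂ : V₂ → V₂ → Prop) [DecidableRel E₂]
    (hs₁ : IsSimpleDigraph E₁) (hc₁ : StronglyConnected E₁)
    (hs₂ : IsSimpleDigraph E₂) (hc₂ : StronglyConnected E₂)
    (n m : ℕ) (hn₁ : Fintype.card V₁ = n) (hn₂ : Fintype.card V₂ = n) (hn4 : 4 ≤ n)
    (hm₁ : (∑ v, outDeg E₁ v) = m) (hm₂ : (∑ v, outDeg E₂ v) = m)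
    (α : ℝ) (hα : 1 / Real.sqrt 2 ≤ α) (hα1 : α < 1)
    (hΔ : (maxOutDeg E₁ : ℝ) ≥ 2 * α * (1 - α) * ((m : ℝ) - n + 1) + 2 * α)
    (hΔΔ : maxOutDeg E₁ > maxOutDeg E₂) :
    lambdaAlpha α E₂ < lambdaAlpha α E₁ :=
  stmt_1_general E₁ E₂ hs₁ hs₂ hc₂ n m hn₂ hn4 hm₂ α hα hα1 hΔ hΔΔ
end

section
/- Let G be a strongly connected digraph with maximum outdegree Δ⁺ and let α ∈ [0,1). Then λ_α(G) > α·Δ⁺. -/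
open Matrix Finset ENNReal

/-!
Let `M = α D + (1 - α) A` as a nonnegative real matrix and let `u` be a vertex of maximum
outdegree, so that `M u u ≥ α Δ⁺`. Strong connectivity gives an arc `u → w` with `w ≠ u` and a
walk from `w` back to `u` of some length `ℓ`; expanding `(M ^ (ℓ + 1)) u u` along the loop at `u`
and along this closed walk gives `(M ^ k) u u ≥ (α Δ⁺) ^ k + (1 - α) ^ k > (α Δ⁺) ^ k` with
`k = ℓ + 1`. Finally, for an entrywise nonnegative matrix `(N ^ n) i i ≥ (N i i) ^ n`, so Gelfand's
formula bounds every diagonal entry by the spectral radius, and `ρ(M ^ k) = ρ(M) ^ k`.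
-/

namespace spectrum

theorem spectralRadius_pow_of_isAlgClosed {𝕜 A : Type*} [NormedField 𝕜] [IsAlgClosed 𝕜]
    [Ring A] [Algebra 𝕜 A] (a : A) {n : ℕ} (hn : n ≠ 0) :
    spectralRadius 𝕜 (a ^ n) = spectralRadius 𝕜 a ^ n := by
  rw [spectralRadius, spectralRadius, map_pow_of_pos a (Nat.pos_of_ne_zero hn), iSup_image,
    ENNReal.iSup₂_pow_of_ne_zero _ hn]
  simp only [nnnorm_pow, ENNReal.coe_pow]

end spectrum

namespace Matrix

section OrderedSemiring

variable {n R : Type*} [Fintype n] [Semiring R] [PartialOrder R] [IsOrderedRing R]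
  {M N : Matrix n n R}

theorem le_mul_apply_of_nonneg (hM : ∀ i j, 0 ≤ M i j) (hN : ∀ i j, 0 ≤ N i j) (i k j : n) :
    M i k * N k j ≤ (M * N) i j :=
  single_le_sum (f := fun l => M i l * N l j) (fun l _ => mul_nonneg (hM i l) (hN l j))
    (mem_univ k)

theorem add_le_mul_apply_of_nonneg (hM : ∀ i j, 0 ≤ M i j) (hN : ∀ i j, 0 ≤ N i j)
    {i k k' j : n} (hk : k ≠ k') : M i k * N k j + M i k' * N k' j ≤ (M * N) i j := by
  classical
  calc M i k * N k j + M i k' * N k' j = ∑ l ∈ {k, k'}, M i l * N l j :=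
        (sum_pair (f := fun l => M i l * N l j) hk).symm
    _ ≤ ∑ l, M i l * N l j :=
        sum_le_sum_of_subset_of_nonneg (subset_univ _) fun l _ _ => mul_nonneg (hM i l) (hN l j)
    _ = (M * N) i j := mul_apply.symm

variable [DecidableEq n]

theorem apply_self_pow_le_pow_apply_self_s7 (hM : ∀ i j, 0 ≤ M i j) (i : n) (k : ℕ) :
    M i i ^ k ≤ (M ^ k) i i := by
  induction k with
  | zero => simp
  | succ k ih =>
    calc M i i ^ (k + 1) = M i i ^ k * M i i := pow_succ _ _
      _ ≤ (M ^ k) i i * M i i := mul_le_mul_of_nonneg_right ih (hM i i)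
      _ ≤ (M ^ k * M) i i := le_mul_apply_of_nonneg (pow_apply_nonneg hM k) hM i i i
      _ = (M ^ (k + 1)) i i := by rw [pow_succ]

theorem exists_pow_le_pow_apply_of_reflTransGen (hM : ∀ i j, 0 ≤ M i j) {E : n → n → Prop}
    {c : R} (hc : 0 ≤ c) (hE : ∀ i j, E i j → c ≤ M i j) {i j : n}
    (h : Relation.ReflTransGen E i j) : ∃ k, c ^ k ≤ (M ^ k) i j := by
  induction h using Relation.ReflTransGen.head_induction_on with
  | refl => exact ⟨0, by simp⟩
  | @head i l hil _ ih =>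
    obtain ⟨k, hk⟩ := ih
    refine ⟨k + 1, ?_⟩
    calc c ^ (k + 1) = c * c ^ k := pow_succ' _ _
      _ ≤ M i l * (M ^ k) l j := mul_le_mul (hE i l hil) hk (pow_nonneg hc k) (hM i l)
      _ ≤ (M * M ^ k) i j := le_mul_apply_of_nonneg hM (pow_apply_nonneg hM k) i l j
      _ = (M ^ (k + 1)) i j := by rw [pow_succ']

end OrderedSemiring

section LinftyOp

attribute [local instance] Matrix.linftyOpSeminormedAddCommGroup

theorem nnnorm_apply_le_linfty_opNNNorm_s7 {m n α : Type*} [Fintype m] [Fintype n]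
    [SeminormedAddCommGroup α] (A : Matrix m n α) (i : m) (j : n) : ‖A i j‖₊ ≤ ‖A‖₊ := by
  rw [linfty_opNNNorm_def]
  exact (single_le_sum (fun _ _ => zero_le) (mem_univ j)).trans
    (le_sup (f := fun i => ∑ j, ‖A i j‖₊) (mem_univ i))

end LinftyOp

theorem ofReal_apply_self_le_spectralRadius_s7 {n : Type*} [Fintype n] [DecidableEq n]
    {M : Matrix n n ℝ} (hM : ∀ i j, 0 ≤ M i j) (i : n) :
    ENNReal.ofReal (M i i) ≤ spectralRadius ℂ (M.map ((↑) : ℝ → ℂ)) := by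
  -- Gelfand's formula holds for any Banach algebra norm; the `ℓ∞` operator norm dominates entries.
  let _ := Matrix.linftyOpNormedRing (n := n) (α := ℂ)
  let _ := Matrix.linftyOpNormedAlgebra (n := n) (R := ℂ) (α := ℂ)
  have : CompleteSpace (Matrix n n ℂ) := FiniteDimensional.complete ℂ _
  set A : Matrix n n ℂ := M.map ((↑) : ℝ → ℂ)
  refine ge_of_tendsto (spectrum.pow_nnnorm_pow_one_div_tendsto_nhds_spectralRadius A) ?_
  filter_upwards [Filter.eventually_ne_atTop 0] with k hk
  have hA : A ^ k = (M ^ k).map (↑) := (Matrix.map_pow M Complex.ofRealHom k).symm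
  have hpow : ENNReal.ofReal (M i i) ^ k ≤ ‖A ^ k‖₊ :=
    calc ENNReal.ofReal (M i i) ^ k = ENNReal.ofReal (M i i ^ k) :=
          (ENNReal.ofReal_pow (hM i i) k).symm
      _ ≤ ENNReal.ofReal ((M ^ k) i i) :=
          ENNReal.ofReal_le_ofReal (apply_self_pow_le_pow_apply_self_s7 hM i k)
      _ = ‖(A ^ k) i i‖₊ := by
          rw [← Real.enorm_eq_ofReal (pow_apply_nonneg hM k i i), ← enorm_eq_nnnorm, hA,
            map_apply]
          simp [enorm_eq_nnnorm, Complex.nnnorm_real]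
      _ ≤ ‖A ^ k‖₊ := by exact_mod_cast nnnorm_apply_le_linfty_opNNNorm_s7 _ i i
  calc ENNReal.ofReal (M i i) = (ENNReal.ofReal (M i i) ^ k) ^ (k : ℝ)⁻¹ :=
        (ENNReal.pow_rpow_inv_natCast hk _).symm
    _ ≤ (‖A ^ k‖₊ : ℝ≥0∞) ^ (1 / k : ℝ) := by
        rw [one_div]; exact ENNReal.rpow_le_rpow hpow (by positivity)

end Matrix

section Digraph

variable {V : Type*} [Fintype V] [DecidableEq V] (α : ℝ) (E : V → V → Prop) [DecidableRel E]

noncomputable def AalphaReal : Matrix V V ℝ :=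
  α • diagonal (fun u => (outDeg E u : ℝ)) + (1 - α) • of (fun u v => if E u v then 1 else 0)

variable {α E}

theorem AalphaReal_apply (i j : V) :
    AalphaReal α E i j = α * (if i = j then (outDeg E i : ℝ) else 0) +
      (1 - α) * (if E i j then 1 else 0) := by
  simp [AalphaReal, diagonal_apply]

theorem Aalpha_eq_map : Aalpha α E = (AalphaReal α E).map (↑) := by
  ext i j
  simp only [Aalpha, AalphaReal_apply, map_apply, Matrix.add_apply, Matrix.smul_apply,
    diagonal_apply, of_apply]
  split_ifs <;> simp

theorem AalphaReal_nonneg (hα0 : 0 ≤ α) (hα1 : α ≤ 1) (i j : V) : 0 ≤ AalphaReal α E i j := by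
  rw [AalphaReal_apply]
  have : 0 ≤ 1 - α := sub_nonneg.2 hα1
  split_ifs <;> positivity

theorem mul_outDeg_le_AalphaReal_apply_self (hα1 : α ≤ 1) (u : V) :
    α * outDeg E u ≤ AalphaReal α E u u := by
  rw [AalphaReal_apply, if_pos rfl]
  have : 0 ≤ 1 - α := sub_nonneg.2 hα1
  split_ifs <;> linarith

theorem one_sub_le_AalphaReal_apply (hα0 : 0 ≤ α) {i j : V} (h : E i j) :
    1 - α ≤ AalphaReal α E i j := by
  rw [AalphaReal_apply, if_pos h]
  split_ifs <;> nlinarith [(outDeg E i).cast_nonneg (α := ℝ)]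

end Digraph

theorem StronglyConnected.exists_ne_adj {V : Type*} [Fintype V] {E : V → V → Prop}
    (hsc : StronglyConnected E) (hcard : 1 < Fintype.card V) (u : V) : ∃ w, w ≠ u ∧ E u w := by
  obtain ⟨v, hv⟩ := Fintype.exists_ne_of_one_lt_card hcard u
  induction hsc u v with
  | refl => exact absurd rfl hv
  | @tail c v _ hcv ih =>
    by_cases hc : c = u
    · exact ⟨v, hv, hc ▸ hcv⟩
    · exact ih hc

theorem exists_pow_lt_AalphaReal_pow_apply_self {V : Type*} [Fintype V] [DecidableEq V]
    {α : ℝ} {E : V → V → Prop} [DecidableRel E] (hα0 : 0 ≤ α) (hα1 : α < 1)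
    (hsc : StronglyConnected E) (hcard : 1 < Fintype.card V) (u : V) :
    ∃ k ≠ 0, (α * outDeg E u) ^ k < (AalphaReal α E ^ k) u u := by
  set M := AalphaReal α E
  have hM := AalphaReal_nonneg (E := E) hα0 hα1.le
  obtain ⟨w, hwu, huw⟩ := hsc.exists_ne_adj hcard u
  obtain ⟨ℓ, hℓ⟩ := exists_pow_le_pow_apply_of_reflTransGen hM (sub_nonneg.2 hα1.le)
    (fun _ _ => one_sub_le_AalphaReal_apply hα0) (hsc w u)
  have hdiag : α * outDeg E u ≤ M u u := mul_outDeg_le_AalphaReal_apply_self hα1.le u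
  refine ⟨ℓ + 1, ℓ.succ_ne_zero, ?_⟩
  calc (α * outDeg E u) ^ (ℓ + 1)
      < (α * outDeg E u) ^ (ℓ + 1) + (1 - α) ^ (ℓ + 1) :=
        lt_add_of_pos_right _ (pow_pos (sub_pos.2 hα1) _)
    _ ≤ M u u * (M ^ ℓ) u u + M u w * (M ^ ℓ) w u := by
        have hd : 0 ≤ α * outDeg E u := by positivity
        rw [pow_succ', pow_succ']
        exact add_le_add
          (mul_le_mul hdiag ((pow_le_pow_left₀ hd hdiag ℓ).trans
            (apply_self_pow_le_pow_apply_self_s7 hM u ℓ)) (pow_nonneg hd ℓ) (hM u u))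
          (mul_le_mul (one_sub_le_AalphaReal_apply hα0 huw) hℓ
            (pow_nonneg (sub_nonneg.2 hα1.le) ℓ) (hM u w))
    _ ≤ (M * M ^ ℓ) u u := add_le_mul_apply_of_nonneg hM (pow_apply_nonneg hM ℓ) hwu.symm
    _ = (M ^ (ℓ + 1)) u u := by rw [pow_succ']

theorem stmt_7_general {V : Type*} [Fintype V] [DecidableEq V]
    (E : V → V → Prop) [DecidableRel E]
    (hsc : StronglyConnected E)
    (hcard : 1 < Fintype.card V)
    (α : ℝ) (hα0 : 0 ≤ α) (hα1 : α < 1) :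
    ENNReal.ofReal (α * (maxOutDeg E : ℝ)) < lambdaAlpha α E := by
  have : Nonempty V := Fintype.card_pos_iff.mp (by omega)
  obtain ⟨u, -, hu⟩ := exists_mem_eq_sup univ univ_nonempty (outDeg E)
  obtain ⟨k, hk, hlt⟩ := exists_pow_lt_AalphaReal_pow_apply_self hα0 hα1 hsc hcard u
  have hρ : ENNReal.ofReal ((AalphaReal α E ^ k) u u) ≤ lambdaAlpha α E ^ k := by
    have hpow : Aalpha α E ^ k = (AalphaReal α E ^ k).map (↑) := by
      rw [Aalpha_eq_map]; exact (Matrix.map_pow _ Complex.ofRealHom k).symm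
    rw [lambdaAlpha, ← spectrum.spectralRadius_pow_of_isAlgClosed _ hk, hpow]
    exact ofReal_apply_self_le_spectralRadius_s7
      (pow_apply_nonneg (AalphaReal_nonneg hα0 hα1.le) k) u
  rw [maxOutDeg, hu]
  refine lt_of_pow_lt_pow_left' k ?_
  rw [← ENNReal.ofReal_pow (by positivity)]
  exact ((ENNReal.ofReal_lt_ofReal_iff_of_nonneg (by positivity)).2 hlt).trans_le hρ

theorem stmt_7 {V : Type*} [Fintype V] [DecidableEq V]
    (E : V → V → Prop) [DecidableRel E]
    (hsimple : IsSimpleDigraph E) (hsc : StronglyConnected E)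
    (hcard : 1 < Fintype.card V)
    (α : ℝ) (hα0 : 0 ≤ α) (hα1 : α < 1) :
    ENNReal.ofReal (α * (maxOutDeg E : ℝ)) < lambdaAlpha α E :=
  stmt_7_general E hsc hcard α hα0 hα1
end

section
/- Let α ∈ [1/2, 1), t ≥ 0, and define f(x) = αx + (1−α)t/x for x > 0. For any real Δ ≥ 2, max{f(2), f(Δ)} ≤ max{αΔ, (1−α)t/2} + 2α. -/
theorem stmt_11 (α t Δ : ℝ) (hα : 1/2 ≤ α) (hα1 : α < 1) (ht : 0 ≤ t) (hΔ : 2 ≤ Δ) :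
    max (α * 2 + (1 - α) * t / 2) (α * Δ + (1 - α) * t / Δ) ≤
      max (α * Δ) ((1 - α) * t / 2) + 2 * α := by
  have hΔ0 : (0:ℝ) < Δ := by linarith
  have hu : (1 - α) * t / Δ * Δ = (1 - α) * t := div_mul_cancel₀ _ (ne_of_gt hΔ0)
  have hB : (1 - α) * t / 2 * 2 = (1 - α) * t := div_mul_cancel₀ _ (by norm_num)
  apply max_le
  · have := le_max_right (α * Δ) ((1 - α) * t / 2)
    linarith
  · rcases le_total ((1 - α) * t / 2) (α * Δ) with h | h
    · have hu2 : (1 - α) * t / Δ ≤ 2 * α := by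
        rw [div_le_iff₀ hΔ0] at *
        nlinarith
      have := le_max_left (α * Δ) ((1 - α) * t / 2)
      linarith
    · have hprod : 0 ≤ (Δ - 2) * ((1 - α) * t / 2 - α * Δ) :=
        mul_nonneg (by linarith) (by linarith)
      have := le_max_right (α * Δ) ((1 - α) * t / 2)
      nlinarith [hu, hB, hprod, hΔ0]
end
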